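/- Let ε : ℝⁿ × ℝⁿ → (Fin n → Fin n → ℝ) be smooth, define Γᵣᵇᵃ(x) = [∂εᵣᵃ(x,y)/∂yᵇ]_{y=x}. For a smooth ω : ℝⁿ × ℝⁿ → ℝ (a nonlinear horizontal 0-form) define the linearization (Lω)(x,ξ) = Σ_a [∂ω(x,y)/∂yᵃ]_{y=x} ξᵃ, the nonlinear total derivative (D̃_r ω)(x,y) = ∂ω/∂xʳ + Σ_a (∂ω/∂yᵃ) εᵣᵃ(x,y), and the linear total derivative (D̂_r F)(x,ξ) = ∂F/∂xʳ + Σ_{a,b}(∂F/∂ξᵃ)Γᵣᵇᵃ(x)ξᵇ on functions ℝⁿ × ℝⁿ → ℝ. Then D̂_r(Lω) = L(D̃_r ω) for all r, where L of a one-indexed family is applied componentwise. -/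

import Mathlib

/-! Proposition 22 (0-form case): the linearization map L intertwines the
nonlinear total derivative D̃ and the linear total derivative D̂. -/

noncomputable section

open scoped BigOperators

def pdx {n : ℕ} (f : (Fin n → ℝ) × (Fin n → ℝ) → ℝ) (r : Fin n)
    (p : (Fin n → ℝ) × (Fin n → ℝ)) : ℝ :=
  fderiv ℝ f p (Pi.single r 1, 0)

def pdy {n : ℕ} (f : (Fin n → ℝ) × (Fin n → ℝ) → ℝ) (a : Fin n)
    (p : (Fin n → ℝ) × (Fin n → ℝ)) : ℝ :=
  fderiv ℝ f p (0, Pi.single a 1)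

/-- The linearization `(Lω)(x,ξ) = Σ_a [∂ω(x,y)/∂yᵃ]_{y=x} ξᵃ`. -/
def linzn {n : ℕ} (ω : (Fin n → ℝ) × (Fin n → ℝ) → ℝ) :
    (Fin n → ℝ) × (Fin n → ℝ) → ℝ :=
  fun p => ∑ a, pdy ω a (p.1, p.1) * p.2 a

/-- Nonlinear total derivative. -/
def ntotalD {n : ℕ} (ε : (Fin n → ℝ) × (Fin n → ℝ) → Fin n → Fin n → ℝ)
    (ω : (Fin n → ℝ) × (Fin n → ℝ) → ℝ) (r : Fin n)
    (p : (Fin n → ℝ) × (Fin n → ℝ)) : ℝ :=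
  pdx ω r p + ∑ a, pdy ω a p * ε p r a

/-- Linear total derivative with coefficients `Γᵣᵇᵃ(x) = ∂εᵣᵃ/∂yᵇ(x,x)`. -/
def ltotalD {n : ℕ} (Γ : (Fin n → ℝ) → Fin n → Fin n → Fin n → ℝ)
    (F : (Fin n → ℝ) × (Fin n → ℝ) → ℝ) (r : Fin n)
    (p : (Fin n → ℝ) × (Fin n → ℝ)) : ℝ :=
  pdx F r p + ∑ a, ∑ b, pdy F a p * Γ p.1 r b a * p.2 b

section Aux

variable {n : ℕ}

abbrev EE (n : ℕ) := (Fin n → ℝ) × (Fin n → ℝ)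

/-- directional derivative of `q ↦ fderiv ω q v`. -/
lemma key_hasFDerivAt (ω : EE n → ℝ) (hω : ContDiff ℝ (⊤ : ℕ∞) ω) (v : EE n) (q : EE n) :
    HasFDerivAt (fun q => fderiv ℝ ω q v)
      ((fderiv ℝ (fderiv ℝ ω) q).flip v) q := by
  have h1 : HasFDerivAt (fderiv ℝ ω) (fderiv ℝ (fderiv ℝ ω) q) q :=
    (((hω.fderiv_right (m := 1) (WithTop.coe_le_coe.mpr le_top)).differentiable one_ne_zero) q).hasFDerivAt
  have h2 := h1.clm_apply (hasFDerivAt_const v q)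
  simpa using h2

/-- the diagonal-in-first-coordinate map as a CLM -/
def diagCLM (n : ℕ) : EE n →L[ℝ] EE n :=
  (ContinuousLinearMap.fst ℝ _ _).prod (ContinuousLinearMap.fst ℝ _ _)

def coordCLM (a : Fin n) : EE n →L[ℝ] ℝ :=
  (ContinuousLinearMap.proj a).comp (ContinuousLinearMap.snd ℝ _ _)

end Aux

theorem linearization_chain_map {n : ℕ}
    (ε : (Fin n → ℝ) × (Fin n → ℝ) → Fin n → Fin n → ℝ)
    (hε : ∀ r a : Fin n, ContDiff ℝ (⊤ : ℕ∞) fun p => ε p r a)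
    (hdiag : ∀ (x : Fin n → ℝ) (r a : Fin n),
      ε (x, x) r a = if r = a then 1 else 0)
    (Γ : (Fin n → ℝ) → Fin n → Fin n → Fin n → ℝ)
    (hΓ : ∀ (x : Fin n → ℝ) (r b a : Fin n),
      Γ x r b a = pdy (fun p => ε p r a) b (x, x))
    (ω : (Fin n → ℝ) × (Fin n → ℝ) → ℝ) (hω : ContDiff ℝ (⊤ : ℕ∞) ω)
    (r : Fin n) :
    ltotalD Γ (linzn ω) r = linzn (ntotalD ε ω r) := by
  funext p
  obtain ⟨x, ξ⟩ := p
  have hωd : Differentiable ℝ ω := hω.differentiable (by simp)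
  set f'' : EE n → EE n →L[ℝ] EE n →L[ℝ] ℝ := fderiv ℝ (fderiv ℝ ω) with hf''def
  -- derivative of linzn ω at (x, ξ)
  have hlin : HasFDerivAt (linzn ω)
      (∑ a, ((fderiv ℝ ω (x, x) (0, Pi.single a 1)) • coordCLM a
        + (ξ a) • (((f'' (x, x)).flip (0, Pi.single a 1)).comp (diagCLM n)))) (x, ξ) := by
    apply HasFDerivAt.fun_sum
    intro a _
    have h1 : HasFDerivAt (fun p : EE n => fderiv ℝ ω (p.1, p.1) (0, Pi.single a 1))
        (((f'' (x, x)).flip (0, Pi.single a 1)).comp (diagCLM n)) (x, ξ) := by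
      exact (key_hasFDerivAt ω hω _ (x, x)).comp (x, ξ) (diagCLM n).hasFDerivAt
    have h2 : HasFDerivAt (fun p : EE n => p.2 a) (coordCLM a) (x, ξ) :=
      (coordCLM a).hasFDerivAt
    exact h1.mul h2
  -- derivative of ntotalD ε ω r at (x, x)
  have hnt : HasFDerivAt (ntotalD ε ω r)
      ((f'' (x, x)).flip (Pi.single r 1, 0)
        + ∑ a, ((fderiv ℝ ω (x, x) (0, Pi.single a 1)) •
              fderiv ℝ (fun p => ε p r a) (x, x)
          + (ε (x, x) r a) • ((f'' (x, x)).flip (0, Pi.single a 1)))) (x, x) := by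
    apply HasFDerivAt.add
    · exact key_hasFDerivAt ω hω _ (x, x)
    · apply HasFDerivAt.fun_sum
      intro a _
      exact (key_hasFDerivAt ω hω _ (x, x)).mul
        (((hε r a).differentiable (by simp) (x, x)).hasFDerivAt)
  -- second derivative symmetry
  have symm : ∀ v w : EE n, f'' (x, x) v w = f'' (x, x) w v :=
    second_derivative_symmetric (fun y => (hωd y).hasFDerivAt)
      (((hω.fderiv_right (m := 1) (WithTop.coe_le_coe.mpr le_top)).differentiable one_ne_zero (x, x)).hasFDerivAt)
  -- compute both sides
  have hpdx : pdx (linzn ω) r (x, ξ)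
      = ∑ a, ξ a * f'' (x, x) (Pi.single r 1, Pi.single r 1) (0, Pi.single a 1) := by
    rw [pdx, hlin.fderiv]
    simp [diagCLM, coordCLM]
  have hpdy : ∀ b, pdy (linzn ω) b (x, ξ) = pdy ω b (x, x) := by
    intro b
    rw [pdy, hlin.fderiv]
    simp [diagCLM, coordCLM, pdy, Pi.single_apply, Prod.mk_zero_zero]
  have hpdy2 : ∀ b, pdy (ntotalD ε ω r) b (x, x)
      = f'' (x, x) (0, Pi.single b 1) (Pi.single r 1, 0)
        + (f'' (x, x) (0, Pi.single b 1) (0, Pi.single r 1)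
          + ∑ a, pdy ω a (x, x) * Γ x r b a) := by
    intro b
    rw [pdy, hnt.fderiv]
    simp only [ContinuousLinearMap.add_apply, ContinuousLinearMap.sum_apply,
      ContinuousLinearMap.smul_apply, ContinuousLinearMap.flip_apply, smul_eq_mul,
      hdiag, hΓ, pdy]
    congr 1
    rw [Finset.sum_add_distrib, add_comm]
    congr 1
    simp [ite_mul]
  -- assemble
  show pdx (linzn ω) r (x, ξ) + ∑ a, ∑ b, pdy (linzn ω) a (x, ξ) * Γ x r b a * ξ b
      = ∑ b, pdy (ntotalD ε ω r) b (x, x) * ξ b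
  rw [hpdx]
  simp only [hpdy, hpdy2]
  have hsplit : ∀ a : Fin n,
      f'' (x, x) (Pi.single r 1, Pi.single r 1) (0, Pi.single a 1)
        = f'' (x, x) (0, Pi.single a 1) (Pi.single r 1, 0)
          + f'' (x, x) (0, Pi.single a 1) (0, Pi.single r 1) := by
    intro a
    rw [symm]
    have : ((Pi.single r 1, Pi.single r 1) : EE n)
        = (Pi.single r 1, 0) + (0, Pi.single r 1) := by
      simp [Prod.ext_iff]
    rw [this, map_add]
  simp only [hsplit]
  rw [show (∑ a, ∑ b, pdy ω a (x, x) * Γ x r b a * ξ b)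
      = ∑ b, ∑ a, pdy ω a (x, x) * Γ x r b a * ξ b from Finset.sum_comm]
  rw [← Finset.sum_add_distrib]
  apply Finset.sum_congr rfl
  intro b _
  rw [← Finset.sum_mul]
  ring


end
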